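/- arXiv:1702.05369 — 6 statements merged into one kernel-verified Lean document; each statement's English description precedes it below -/
import Mathlib

section
/- There exist α ∈ (0, 1/2), K₀ > 0 and a constant C > 0 such that for all K ≥ K₀ and all n ∈ ℤ₊^d with ‖n‖ ≤ R·K, the generator applied to the Lyapunov function satisfies 𝓛_K φ(n) ≤ ( −α·β·(‖n‖/K)·(‖n − n*‖²/K) + C ) · φ(n). -/
open scoped BigOperators RealInnerProductSpace

noncomputable section

namespace MultitypeBD

variable {d : ℕ}

/-- The real vector associated to a lattice point. -/
def toVec (n : Fin d → ℤ) : EuclideanSpace ℝ (Fin d) := WithLp.toLp 2 (fun i => (n i : ℝ))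

/-- The lattice point `n* = ⌊K·x*⌋` (componentwise floor). -/
def nstar (K : ℝ) (xstar : EuclideanSpace ℝ (Fin d)) : Fin d → ℤ := fun i => ⌊K * xstar i⌋

/-- The Lyapunov function `φ(n) = exp((α/K)·‖n − n*‖²)`. -/
def lyap (α K : ℝ) (xstar : EuclideanSpace ℝ (Fin d)) (n : Fin d → ℤ) : ℝ :=
  Real.exp ((α / K) * ‖toVec n - toVec (nstar K xstar)‖ ^ 2)

/-- The generator
`𝓛_K f(n) = K·Σ_j [B_j(n/K)(f(n+e_j) − f(n)) + D_j(n/K)(f(n−e_j) − f(n))]`. -/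
def gen (K : ℝ) (B D : EuclideanSpace ℝ (Fin d) → EuclideanSpace ℝ (Fin d))
    (f : (Fin d → ℤ) → ℝ) (n : Fin d → ℤ) : ℝ :=
  K * ∑ j : Fin d,
    (B (WithLp.toLp 2 (fun i => (n i : ℝ) / K)) j * (f (Function.update n j (n j + 1)) - f n)
      + D (WithLp.toLp 2 (fun i => (n i : ℝ) / K)) j * (f (Function.update n j (n j - 1)) - f n))

end MultitypeBD

open MultitypeBD

/-!
Write `x = n/K` and `m = n - n*`. Since `φ(n ± e_j)/φ(n) = exp((α/K)(±2 m_j + 1))`, the bound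
`eᵗ - 1 ≤ t + t²` for `|t| ≤ 1` turns `𝓛_K φ(n)/φ(n)` into `2α⟪B x - D x, m⟫` plus terms of
size `α(‖B x‖ + ‖D x‖)` and `(α²/K)(‖B x‖ + ‖D x‖)‖m‖²`. As `m = K(x - x*) + O(√d)`, the drift
condition (extended to `‖x‖ = R` by continuity) bounds the first term by
`-2αβ‖x‖‖m‖²/K + O(‖x‖)`. Since `B 0 = D 0 = 0` and both maps are locally Lipschitz,
`‖B x‖, ‖D x‖ ≤ L‖x‖` on the compact part of the orthant, so for `α ≤ β/(8L)` the quadratic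
remainder uses up at most half of the drift.
-/

open Filter Topology Metric

theorem LocallyLipschitzOn.exists_norm_le_mul_norm {E F : Type*} [NormedAddCommGroup E]
    [ProperSpace E] [SeminormedAddCommGroup F] {s : Set E} {f : E → F}
    (hf : LocallyLipschitzOn s f) (hs : IsClosed s) (h0 : (0 : E) ∈ s) (hf0 : f 0 = 0) (R : ℝ) :
    ∃ L : ℝ, 0 < L ∧ ∀ x ∈ s, ‖x‖ ≤ R → ‖f x‖ ≤ L * ‖x‖ := by
  obtain ⟨L, hL⟩ := (hf.mono Set.inter_subset_left).exists_lipschitzOnWith_of_compact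
    ((isCompact_closedBall (0 : E) R).inter_left hs)
  refine ⟨L + 1, by positivity, fun x hx hxR => ?_⟩
  have h0R : (0 : E) ∈ s ∩ closedBall 0 R :=
    ⟨h0, mem_closedBall_self ((norm_nonneg x).trans hxR)⟩
  have := hL.norm_sub_le ⟨hx, mem_closedBall_zero_iff.2 hxR⟩ h0R
  rw [hf0, sub_zero, sub_zero] at this
  exact this.trans (by gcongr; linarith)

theorem StarConvex.mem_closure_inter_ball {E : Type*} [NormedAddCommGroup E] [NormedSpace ℝ E]
    {s : Set E} (hs : StarConvex ℝ 0 s) {x : E} (hx : x ∈ s) {R : ℝ} (hR : 0 < R)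
    (hxR : ‖x‖ ≤ R) : x ∈ closure (s ∩ ball 0 R) := by
  have hlim : Tendsto (fun t : ℝ => t • x) (𝓝[<] 1) (𝓝 x) :=
    ((continuous_id.smul continuous_const).tendsto' (1 : ℝ) x (one_smul ℝ x)).mono_left
      nhdsWithin_le_nhds
  refine mem_closure_of_tendsto hlim ?_
  filter_upwards [Ioo_mem_nhdsLT zero_lt_one] with t ⟨ht0, ht1⟩
  refine ⟨hs.smul_mem hx ht0.le ht1.le, ?_⟩
  rw [mem_ball_zero_iff, norm_smul, Real.norm_of_nonneg ht0.le]
  nlinarith [norm_nonneg x]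

theorem StarConvex.le_of_forall_norm_lt {E : Type*} [NormedAddCommGroup E] [NormedSpace ℝ E]
    {s : Set E} (hs : StarConvex ℝ 0 s) (hs' : IsClosed s) {f g : E → ℝ}
    (hf : ContinuousOn f s) (hg : ContinuousOn g s) {R : ℝ} (hR : 0 < R)
    (h : ∀ x ∈ s, ‖x‖ < R → f x ≤ g x) {x : E} (hx : x ∈ s) (hxR : ‖x‖ ≤ R) : f x ≤ g x := by
  have hcl : closure (s ∩ ball 0 R) ⊆ s := closure_minimal Set.inter_subset_left hs'
  exact le_on_closure (fun y hy => h y hy.1 (mem_ball_zero_iff.1 hy.2)) (hf.mono hcl)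
    (hg.mono hcl) (hs.mem_closure_inter_ball hx hR hxR)

theorem inner_smul_add_le {E : Type*} [NormedAddCommGroup E] [InnerProductSpace ℝ E]
    {v y ε : E} {K β r a s c : ℝ} (hK : 1 ≤ K) (hβ : 0 ≤ β) (hr : 0 ≤ r)
    (hdrift : ⟪v, y⟫ ≤ -β * r * ‖y‖ ^ 2) (hy : ‖y‖ ≤ a) (hε : ‖ε‖ ≤ s) (hv : ‖v‖ ≤ c * r) :
    ⟪v, K • y + ε⟫ ≤ -β * r * (‖K • y + ε‖ ^ 2 / K) + r * (β * (2 * a * s + s ^ 2) + c * s) := by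
  have hK0 : 0 < K := one_pos.trans_le hK
  have hs : 0 ≤ s := (norm_nonneg ε).trans hε
  have hvε : ⟪v, ε⟫ ≤ c * r * s := (real_inner_le_norm v ε).trans
    (mul_le_mul hv hε (norm_nonneg ε) ((norm_nonneg v).trans hv))
  have hsq : ‖K • y + ε‖ ^ 2 / K ≤ K * ‖y‖ ^ 2 + (2 * a * s + s ^ 2) := by
    have htri : ‖K • y + ε‖ ≤ K * ‖y‖ + s := by
      refine (norm_add_le _ _).trans ?_
      rw [norm_smul, Real.norm_of_nonneg hK0.le]
      linarith
    rw [div_le_iff₀ hK0]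
    nlinarith [norm_nonneg (K • y + ε), norm_nonneg y, mul_le_mul_of_nonneg_left hy hs]
  have hβr : 0 ≤ β * r := mul_nonneg hβ hr
  rw [inner_add_right, real_inner_smul_right]
  nlinarith [mul_le_mul_of_nonneg_left hsq hβr, mul_le_mul_of_nonneg_left hdrift hK0.le]

theorem mul_exp_sub_one_add_mul_exp_sub_one_le {α K b c m ℓ : ℝ} (hα : 0 ≤ α) (hK : 0 < K)
    (hb : 0 ≤ b) (hc : 0 ≤ c) (hbℓ : b ≤ ℓ) (hcℓ : c ≤ ℓ) (hm : α / K * (2 * |m| + 1) ≤ 1) :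
    K * (b * (Real.exp (α / K * (2 * m + 1)) - 1) + c * (Real.exp (α / K * (-2 * m + 1)) - 1))
      ≤ 2 * α * ((b - c) * m) + 2 * α * ℓ + α ^ 2 * ℓ / K * (8 * m ^ 2 + 2) := by
  have hexp : ∀ u : ℝ, |u| ≤ 2 * |m| + 1 →
      Real.exp (α / K * u) - 1 ≤ α / K * u + (α / K * u) ^ 2 := by
    intro u hu
    have hle : |α / K * u| ≤ 1 := by
      refine le_trans ?_ hm
      rw [abs_mul, abs_of_nonneg (by positivity)]
      gcongr
    linarith [le_abs_self (Real.exp (α / K * u) - 1 - α / K * u),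
      Real.abs_exp_sub_one_sub_id_le hle]
  have hplus := hexp (2 * m + 1) ((abs_add_le _ _).trans (by simp [abs_mul]))
  have hminus := hexp (-2 * m + 1) ((abs_add_le _ _).trans (by simp [abs_mul]))
  calc K * (b * (Real.exp (α / K * (2 * m + 1)) - 1) + c * (Real.exp (α / K * (-2 * m + 1)) - 1))
      ≤ K * (b * (α / K * (2 * m + 1) + (α / K * (2 * m + 1)) ^ 2)
          + c * (α / K * (-2 * m + 1) + (α / K * (-2 * m + 1)) ^ 2)) := by
        gcongr
    _ = 2 * α * ((b - c) * m) + α * (b + c)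
          + α ^ 2 / K * (b * (2 * m + 1) ^ 2 + c * (-2 * m + 1) ^ 2) := by
        field_simp
        ring
    _ ≤ 2 * α * ((b - c) * m) + 2 * α * ℓ + α ^ 2 * ℓ / K * (8 * m ^ 2 + 2) := by
        have hsq : b * (2 * m + 1) ^ 2 + c * (-2 * m + 1) ^ 2 ≤ ℓ * (8 * m ^ 2 + 2) := by
          nlinarith [sq_nonneg (2 * m + 1), sq_nonneg (-2 * m + 1)]
        have : α ^ 2 / K * (b * (2 * m + 1) ^ 2 + c * (-2 * m + 1) ^ 2)
            ≤ α ^ 2 * ℓ / K * (8 * m ^ 2 + 2) := by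
          rw [mul_div_right_comm, mul_assoc]
          gcongr
        nlinarith

theorem isClosed_nonneg_orthant (d : ℕ) :
    IsClosed {x : EuclideanSpace ℝ (Fin d) | ∀ i, 0 ≤ x i} := by
  simp only [Set.ofPred_forall]
  exact isClosed_iInter fun i => isClosed_le continuous_const (PiLp.continuous_apply 2 _ i)

theorem starConvex_nonneg_orthant (d : ℕ) :
    StarConvex ℝ 0 {x : EuclideanSpace ℝ (Fin d) | ∀ i, 0 ≤ x i} :=
  fun x hx a b _ hb _ i => by simpa using mul_nonneg hb (hx i)

namespace MultitypeBD

variable {d : ℕ}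

theorem toLp_div_eq_inv_smul (n : Fin d → ℤ) (K : ℝ) :
    WithLp.toLp 2 (fun i => (n i : ℝ) / K) = K⁻¹ • toVec n := by
  ext i
  simp [toVec, div_eq_inv_mul]

theorem toVec_update_add (n : Fin d → ℤ) (j : Fin d) (c : ℤ) :
    toVec (Function.update n j (n j + c)) = toVec n + (c : ℝ) • EuclideanSpace.single j 1 := by
  ext i
  by_cases hij : i = j
  · subst hij
    simp [toVec]
  · simp [toVec, Function.update, hij]

theorem norm_add_smul_single_sq (v : EuclideanSpace ℝ (Fin d)) (j : Fin d) (c : ℝ) :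
    ‖v + c • EuclideanSpace.single j 1‖ ^ 2 = ‖v‖ ^ 2 + (2 * c * v j + c ^ 2) := by
  rw [norm_add_sq_real, real_inner_smul_right, EuclideanSpace.inner_single_right, norm_smul]
  simp
  ring

theorem lyap_update_add (α K : ℝ) (xstar : EuclideanSpace ℝ (Fin d)) (n : Fin d → ℤ)
    (j : Fin d) (c : ℤ) :
    lyap α K xstar (Function.update n j (n j + c)) = lyap α K xstar n *
      Real.exp (α / K * (2 * c * (toVec n - toVec (nstar K xstar)) j + c ^ 2)) := by
  rw [lyap, lyap, toVec_update_add, add_sub_right_comm, norm_add_smul_single_sq, mul_add,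
    Real.exp_add]

theorem gen_lyap_eq (α K : ℝ) (B D : EuclideanSpace ℝ (Fin d) → EuclideanSpace ℝ (Fin d))
    (xstar : EuclideanSpace ℝ (Fin d)) (n : Fin d → ℤ) :
    gen K B D (lyap α K xstar) n = lyap α K xstar n * (K * ∑ j,
      (B (K⁻¹ • toVec n) j *
          (Real.exp (α / K * (2 * (toVec n - toVec (nstar K xstar)) j + 1)) - 1)
        + D (K⁻¹ • toVec n) j *
          (Real.exp (α / K * (-2 * (toVec n - toVec (nstar K xstar)) j + 1)) - 1))) := by
  have hminus : ∀ j, n j - 1 = n j + (-1 : ℤ) := fun j => by ring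
  simp only [gen, toLp_div_eq_inv_smul, hminus, lyap_update_add, Finset.mul_sum]
  refine Finset.sum_congr rfl fun j _ => ?_
  push_cast
  ring_nf

theorem norm_smul_sub_toVec_nstar_le (K : ℝ) (xstar : EuclideanSpace ℝ (Fin d)) :
    ‖K • xstar - toVec (nstar K xstar)‖ ≤ √d := by
  rw [EuclideanSpace.norm_eq]
  gcongr
  calc ∑ i, ‖(K • xstar - toVec (nstar K xstar)) i‖ ^ 2 ≤ ∑ _i : Fin d, (1 : ℝ) := by
        refine Finset.sum_le_sum fun i _ => ?_
        have hfract : (K • xstar - toVec (nstar K xstar)) i = Int.fract (K * xstar i) := by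
          simp [toVec, nstar, Int.self_sub_floor]
        rw [hfract, Real.norm_of_nonneg (Int.fract_nonneg _)]
        nlinarith [Int.fract_nonneg (K * xstar i), Int.fract_lt_one (K * xstar i)]
    _ = d := by simp

theorem sum_mul_exp_sub_one_le (b c m : EuclideanSpace ℝ (Fin d)) {α K ℓ : ℝ} (hα : 0 ≤ α)
    (hK : 0 < K) (hb : ∀ j, 0 ≤ b j) (hc : ∀ j, 0 ≤ c j) (hbℓ : ‖b‖ ≤ ℓ) (hcℓ : ‖c‖ ≤ ℓ)
    (hm : α / K * (2 * ‖m‖ + 1) ≤ 1) :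
    K * ∑ j, (b j * (Real.exp (α / K * (2 * m j + 1)) - 1)
        + c j * (Real.exp (α / K * (-2 * m j + 1)) - 1))
      ≤ 2 * α * ⟪b - c, m⟫ + 2 * α * d * ℓ + α ^ 2 * ℓ / K * (8 * ‖m‖ ^ 2 + 2 * d) := by
  have hcoord : ∀ (v : EuclideanSpace ℝ (Fin d)) j, |v j| ≤ ‖v‖ := PiLp.norm_apply_le
  rw [Finset.mul_sum]
  refine (Finset.sum_le_sum fun j _ => mul_exp_sub_one_add_mul_exp_sub_one_le hα hK (hb j) (hc j)
    ((le_abs_self _).trans ((hcoord b j).trans hbℓ))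
    ((le_abs_self _).trans ((hcoord c j).trans hcℓ)) (hm.trans' ?_)).trans_eq ?_
  · gcongr
    exact hcoord m j
  · simp only [Finset.sum_add_distrib, ← Finset.mul_sum, EuclideanSpace.real_norm_sq_eq,
      PiLp.inner_apply, Finset.sum_const, Finset.card_univ, Fintype.card_fin, nsmul_eq_mul]
    simp [mul_comm]
    ring

theorem toVec_sub_toVec_nstar {K : ℝ} (hK : K ≠ 0) (xstar : EuclideanSpace ℝ (Fin d))
    (n : Fin d → ℤ) : toVec n - toVec (nstar K xstar)
      = K • (K⁻¹ • toVec n - xstar) + (K • xstar - toVec (nstar K xstar)) := by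
  rw [smul_sub, smul_inv_smul₀ hK]
  abel

theorem norm_toVec_sub_toVec_nstar_le {K R : ℝ} {xstar : EuclideanSpace ℝ (Fin d)}
    {n : Fin d → ℤ} (hK : 0 < K) (hKd : √d ≤ K) (hxstar : ‖xstar‖ ≤ R)
    (hxR : ‖K⁻¹ • toVec n‖ ≤ R) : ‖toVec n - toVec (nstar K xstar)‖ ≤ (2 * R + 1) * K := by
  rw [toVec_sub_toVec_nstar hK.ne']
  refine (norm_add_le _ _).trans ?_
  rw [norm_smul, Real.norm_of_nonneg hK.le]
  have hxx : ‖K⁻¹ • toVec n - xstar‖ ≤ 2 * R := (norm_sub_le _ _).trans (by linarith)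
  nlinarith only [mul_le_mul_of_nonneg_left hxx hK.le, norm_smul_sub_toVec_nstar_le K xstar, hKd]

theorem gen_lyap_le {B D : EuclideanSpace ℝ (Fin d) → EuclideanSpace ℝ (Fin d)}
    {xstar : EuclideanSpace ℝ (Fin d)} {α β K L R C : ℝ} {n : Fin d → ℤ}
    (hα : 0 ≤ α) (hβ : 0 ≤ β) (hL : 0 ≤ L) (hαR : α * (4 * R + 3) ≤ 1) (hαL : 8 * α * L ≤ β)
    (hK : √d + 1 ≤ K) (hxstar : ‖xstar‖ ≤ R) (hxR : ‖K⁻¹ • toVec n‖ ≤ R)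
    (hBnn : ∀ j, 0 ≤ B (K⁻¹ • toVec n) j) (hDnn : ∀ j, 0 ≤ D (K⁻¹ • toVec n) j)
    (hBL : ‖B (K⁻¹ • toVec n)‖ ≤ L * ‖K⁻¹ • toVec n‖)
    (hDL : ‖D (K⁻¹ • toVec n)‖ ≤ L * ‖K⁻¹ • toVec n‖)
    (hdrift : ⟪B (K⁻¹ • toVec n) - D (K⁻¹ • toVec n), K⁻¹ • toVec n - xstar⟫
      ≤ -β * ‖K⁻¹ • toVec n‖ * ‖K⁻¹ • toVec n - xstar‖ ^ 2)
    (hC : 2 * R * (β * (4 * R * √d + d) + 2 * L * √d + 2 * d * L) ≤ C) :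
    gen K B D (lyap α K xstar) n ≤
      (-(α * β) * (‖toVec n‖ / K) * (‖toVec n - toVec (nstar K xstar)‖ ^ 2 / K) + C)
        * lyap α K xstar n := by
  set x := K⁻¹ • toVec n
  set m := toVec n - toVec (nstar K xstar)
  have hK1 : 1 ≤ K := by linarith [Real.sqrt_nonneg d]
  have hK0 : 0 < K := by linarith
  have hR : 0 ≤ R := (norm_nonneg _).trans hxstar
  have hexp : α / K * (2 * ‖m‖ + 1) ≤ 1 := by
    have hmK := norm_toVec_sub_toVec_nstar_le hK0 (by linarith) hxstar hxR
    rw [div_mul_eq_mul_div, div_le_one hK0]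
    nlinarith only [mul_le_mul_of_nonneg_left hmK hα, mul_le_mul_of_nonneg_right hαR hK0.le,
      hα, hK1]
  have hsum := sum_mul_exp_sub_one_le (B x) (D x) m hα hK0 hBnn hDnn hBL hDL hexp
  have hinner := inner_smul_add_le (a := 2 * R) (c := 2 * L) hK1 hβ (norm_nonneg x) hdrift
    ((norm_sub_le _ _).trans (by linarith)) (norm_smul_sub_toVec_nstar_le K xstar)
    ((norm_sub_le_of_le hBL hDL).trans_eq (by ring))
  rw [← toVec_sub_toVec_nstar hK0.ne', Real.sq_sqrt (Nat.cast_nonneg d)] at hinner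
  have hnorm : ‖toVec n‖ / K = ‖x‖ := by
    rw [norm_smul, norm_inv, Real.norm_of_nonneg hK0.le, inv_mul_eq_div]
  rw [gen_lyap_eq, mul_comm, hnorm]
  refine mul_le_mul_of_nonneg_right ?_ (Real.exp_pos _).le
  set r := ‖x‖
  have hr : 0 ≤ r := norm_nonneg x
  have hα1 : α ≤ 1 := by nlinarith only [hαR, mul_nonneg hα hR]
  have hquad : α ^ 2 * (L * r) / K * (8 * ‖m‖ ^ 2 + 2 * d)
      ≤ α * β * r * (‖m‖ ^ 2 / K) + 2 * α * r * (d * L) := by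
    have hαK : α / K ≤ 1 := (div_le_one hK0).2 (hα1.trans hK1)
    have hsplit : α ^ 2 * (L * r) / K * (8 * ‖m‖ ^ 2 + 2 * d)
        = 8 * α * L * (α * r * (‖m‖ ^ 2 / K)) + 2 * α * r * (d * L) * (α / K) := by ring
    rw [hsplit]
    linarith [mul_le_mul_of_nonneg_right hαL (by positivity : 0 ≤ α * r * (‖m‖ ^ 2 / K)),
      mul_le_of_le_one_right (by positivity : 0 ≤ 2 * α * r * (d * L)) hαK]
  have hαr : α * r ≤ R := by nlinarith only [hxR, mul_le_mul_of_nonneg_right hα1 hr]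
  have hrest : 2 * (α * r) * (β * (4 * R * √d + d) + 2 * L * √d + 2 * d * L)
      ≤ 2 * R * (β * (4 * R * √d + d) + 2 * L * √d + 2 * d * L) := by
    gcongr
  linarith [mul_le_mul_of_nonneg_left hinner (by positivity : (0 : ℝ) ≤ 2 * α)]

end MultitypeBD

theorem lyapunov_generator_bound_general (d : ℕ)
    (B D : EuclideanSpace ℝ (Fin d) → EuclideanSpace ℝ (Fin d))
    (hBnonneg : ∀ x : EuclideanSpace ℝ (Fin d), (∀ i, 0 ≤ x i) → ∀ j, 0 ≤ B x j)
    (hDnonneg : ∀ x : EuclideanSpace ℝ (Fin d), (∀ i, 0 ≤ x i) → ∀ j, 0 ≤ D x j)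
    (hBlip : LocallyLipschitzOn {x : EuclideanSpace ℝ (Fin d) | ∀ i, 0 ≤ x i} B)
    (hDlip : LocallyLipschitzOn {x : EuclideanSpace ℝ (Fin d) | ∀ i, 0 ≤ x i} D)
    (hB0 : B 0 = 0) (hD0 : D 0 = 0)
    (xstar : EuclideanSpace ℝ (Fin d))
    (β R : ℝ) (hβ : 0 < β) (hR : ‖xstar‖ < R)
    (hlyapcond : ∀ x : EuclideanSpace ℝ (Fin d), (∀ i, 0 ≤ x i) → ‖x‖ < R →
      ⟪B x - D x, x - xstar⟫ ≤ -β * ‖x‖ * ‖x - xstar‖ ^ 2) :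
    ∃ α K₀ C : ℝ, 0 < α ∧ α < 1 / 2 ∧ 0 < K₀ ∧ 0 < C ∧
      ∀ K : ℝ, K₀ ≤ K → ∀ n : Fin d → ℤ, (∀ i, 0 ≤ n i) →
        ‖toVec n‖ ≤ R * K →
        gen K B D (lyap α K xstar) n ≤
          (-(α * β) * (‖toVec n‖ / K) * (‖toVec n - toVec (nstar K xstar)‖ ^ 2 / K) + C)
            * lyap α K xstar n := by
  have hR0 : 0 < R := (norm_nonneg xstar).trans_lt hR
  have h0 : (0 : EuclideanSpace ℝ (Fin d)) ∈ {x : EuclideanSpace ℝ (Fin d) | ∀ i, 0 ≤ x i} :=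
    fun _ => le_rfl
  obtain ⟨LB, hLB, hBL⟩ := hBlip.exists_norm_le_mul_norm (isClosed_nonneg_orthant d) h0 hB0 R
  obtain ⟨LD, hLD, hDL⟩ := hDlip.exists_norm_le_mul_norm (isClosed_nonneg_orthant d) h0 hD0 R
  set L := max LB LD
  have hL : 0 < L := hLB.trans_le (le_max_left _ _)
  -- `α ≤ 1/(4R+3)` keeps the exponents of `φ(n ± e_j)/φ(n)` in `[-1, 1]`, and `α ≤ β/(8L)` lets
  -- the drift absorb the second-order Taylor terms.
  set α := min (1 / (4 * R + 3)) (β / (8 * L))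
  have hα : 0 < α := lt_min (by positivity) (by positivity)
  have hαR : α * (4 * R + 3) ≤ 1 := (le_div_iff₀ (by positivity)).1 (min_le_left _ _)
  have hαL : 8 * α * L ≤ β := by
    have := (le_div_iff₀ (by positivity)).1 (min_le_right (1 / (4 * R + 3)) (β / (8 * L)))
    linarith
  set C₀ := 2 * R * (β * (4 * R * √d + d) + 2 * L * √d + 2 * d * L)
  refine ⟨α, √d + 1, max 1 C₀, hα, by nlinarith only [hαR, hα, hR0], by positivity, lt_max_of_lt_left one_pos,
    fun K hK n hn hnR => ?_⟩
  have hK0 : 0 < K := by linarith [Real.sqrt_nonneg d]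
  have hx : ∀ i, 0 ≤ (K⁻¹ • toVec n) i := fun i => by
    simpa [toVec] using mul_nonneg (inv_nonneg.2 hK0.le) (Int.cast_nonneg (hn i))
  have hxR : ‖K⁻¹ • toVec n‖ ≤ R := by
    rw [norm_smul, norm_inv, Real.norm_of_nonneg hK0.le, inv_mul_le_iff₀ hK0]
    linarith
  have hdrift := (starConvex_nonneg_orthant d).le_of_forall_norm_lt (isClosed_nonneg_orthant d)
    ((hBlip.continuousOn.sub hDlip.continuousOn).inner (continuousOn_id.sub continuousOn_const))
    (by fun_prop) hR0 hlyapcond hx hxR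
  exact gen_lyap_le hα.le hβ.le hL.le hαR hαL hK hR.le hxR (hBnonneg _ hx) (hDnonneg _ hx)
    ((hBL _ hx hxR).trans (by gcongr; exact le_max_left _ _))
    ((hDL _ hx hxR).trans (by gcongr; exact le_max_right _ _)) hdrift (le_max_right _ _)

/-- Theorem on the Lyapunov function: there exist `α ∈ (0,1/2)`, `K₀ > 0`
and `C > 0` such that for all `K ≥ K₀` and all `n ∈ ℤ₊^d` with `‖n‖ ≤ R·K`,
`𝓛_K φ(n) ≤ (−α·β·(‖n‖/K)·(‖n − n*‖²/K) + C)·φ(n)`. -/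
theorem lyapunov_generator_bound (d : ℕ) (hd : 1 ≤ d)
    (B D : EuclideanSpace ℝ (Fin d) → EuclideanSpace ℝ (Fin d))
    (hBnonneg : ∀ x : EuclideanSpace ℝ (Fin d), (∀ i, 0 ≤ x i) → ∀ j, 0 ≤ B x j)
    (hDnonneg : ∀ x : EuclideanSpace ℝ (Fin d), (∀ i, 0 ≤ x i) → ∀ j, 0 ≤ D x j)
    (hBlip : LocallyLipschitzOn {x : EuclideanSpace ℝ (Fin d) | ∀ i, 0 ≤ x i} B)
    (hDlip : LocallyLipschitzOn {x : EuclideanSpace ℝ (Fin d) | ∀ i, 0 ≤ x i} D)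
    (hB0 : B 0 = 0) (hD0 : D 0 = 0)
    (xstar : EuclideanSpace ℝ (Fin d)) (hxstar : ∀ i, 0 < xstar i)
    (hfix : B xstar = D xstar)
    (β R : ℝ) (hβ : 0 < β) (hR : ‖xstar‖ < R)
    (hlyapcond : ∀ x : EuclideanSpace ℝ (Fin d), (∀ i, 0 ≤ x i) → ‖x‖ < R →
      ⟪B x - D x, x - xstar⟫ ≤ -β * ‖x‖ * ‖x - xstar‖ ^ 2) :
    ∃ α K₀ C : ℝ, 0 < α ∧ α < 1 / 2 ∧ 0 < K₀ ∧ 0 < C ∧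
      ∀ K : ℝ, K₀ ≤ K → ∀ n : Fin d → ℤ, (∀ i, 0 ≤ n i) →
        ‖toVec n‖ ≤ R * K →
        gen K B D (lyap α K xstar) n ≤
          (-(α * β) * (‖toVec n‖ / K) * (‖toVec n - toVec (nstar K xstar)‖ ^ 2 / K) + C)
            * lyap α K xstar n :=
  lyapunov_generator_bound_general d B D hBnonneg hDnonneg hBlip hDlip hB0 hD0 xstar β R hβ hR
    hlyapcond
end
end

section
/- Assume λ_j(n) > 0 and μ_j(n) > 0 for every j ∈ {1,…,d} and every n ∈ E. Then there exists a function π : E → (0,∞) satisfying π(n)·λ_j(n) = μ_j(n + e_j)·π(n + e_j) for all j and all n ∈ E if and only if for every circuit (n⁽¹⁾, …, n⁽ᵏ⁾, n⁽ᵏ⁺¹⁾) contained in E one has ∏_{ℓ=1}^{k} ρ(ε^{(j_ℓ)}, n⁽ˡ⁾) = 1. -/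
open scoped BigOperators

noncomputable section

namespace SelfAdjointBD

variable {d : ℕ}

/-- The `j`-th standard basis vector of `ℤ^d`. -/
def unitvec (j : Fin d) : Fin d → ℤ := fun i => if i = j then 1 else 0

/-- The state space `E = ℤ₊^d \ {0}`. -/
def E (d : ℕ) : Set (Fin d → ℤ) := {n | (∀ i, 0 ≤ n i) ∧ n ≠ 0}

/-- `ρ(ε^{(j)}, n)`: for `ε^{(j)} = +e_j` (sign `true`) this is `λ_j(n)/μ_j(n+e_j)`,
and for `ε^{(j)} = −e_j` (sign `false`) it is `μ_j(n)/λ_j(n−e_j)`. -/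
def rho (lam mu : Fin d → (Fin d → ℤ) → ℝ) (s : Bool) (j : Fin d) (n : Fin d → ℤ) : ℝ :=
  if s then lam j n / mu j (n + unitvec j) else mu j n / lam j (n - unitvec j)

end SelfAdjointBD

open SelfAdjointBD

/-!
A path in a set `S ⊆ ℤ^d` is encoded by its start point and its list of moves `±e_j`; its weight
is the product of the `ρ`'s along it. If `π` is a detailed balance measure, each factor is
`ρ(ε, n) = π(n + ε) / π(n)`, so the product telescopes to `1` along a circuit. Conversely, since
`ρ(-ε, n + ε) = ρ(ε, n)⁻¹`, reversing a path inverts its weight, and the circuit condition makes the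
weight of a path depend only on its endpoints. `E` is connected (`a` and `b` both reach `a + b` by
increasing moves), so fixing `a ∈ E` and letting `π(b)` be the weight of a path from `a` to `b`
defines the measure.
-/

namespace SelfAdjointBD

variable {d : ℕ}

abbrev Move (d : ℕ) := Bool × Fin d

def Move.vec (p : Move d) : Fin d → ℤ := if p.1 then unitvec p.2 else -unitvec p.2

def Move.reverse (p : Move d) : Move d := (!p.1, p.2)

@[simp]
lemma Move.vec_reverse (p : Move d) : p.reverse.vec = -p.vec := by
  obtain ⟨s, j⟩ := p
  cases s <;> simp [Move.vec, Move.reverse]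

lemma add_unitvec_mem {n : Fin d → ℤ} (hn : n ∈ E d) (j : Fin d) : n + unitvec j ∈ E d := by
  refine ⟨fun i => add_nonneg (hn.1 i) (by unfold unitvec; split <;> norm_num), fun h0 => ?_⟩
  have hj : n j + 1 = 0 := by simpa [unitvec] using congrFun h0 j
  linarith [hn.1 j]

section Walks

variable (S : Set (Fin d → ℤ)) (lam mu : Fin d → (Fin d → ℤ) → ℝ)

def walkEnd (a : Fin d → ℤ) (L : List (Move d)) : Fin d → ℤ :=
  L.foldl (fun x p => x + p.vec) a

def IsWalkIn (a : Fin d → ℤ) : List (Move d) → Prop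
  | [] => a ∈ S
  | p :: L => a ∈ S ∧ IsWalkIn (a + p.vec) L

def walkWeight (a : Fin d → ℤ) : List (Move d) → ℝ
  | [] => 1
  | p :: L => rho lam mu p.1 p.2 a * walkWeight (a + p.vec) L

def walkReverse (L : List (Move d)) : List (Move d) := (L.map Move.reverse).reverse

def Reachable (a b : Fin d → ℤ) : Prop := ∃ L, IsWalkIn S a L ∧ walkEnd a L = b

variable {S lam mu}

@[simp]
lemma walkEnd_nil (a : Fin d → ℤ) : walkEnd a [] = a := rfl

@[simp]
lemma walkEnd_cons (a : Fin d → ℤ) (p : Move d) (L : List (Move d)) :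
    walkEnd a (p :: L) = walkEnd (a + p.vec) L := rfl

lemma walkEnd_append (a : Fin d → ℤ) (L M : List (Move d)) :
    walkEnd a (L ++ M) = walkEnd (walkEnd a L) M :=
  List.foldl_append

lemma walkReverse_cons (p : Move d) (L : List (Move d)) :
    walkReverse (p :: L) = walkReverse L ++ [p.reverse] := by
  simp [walkReverse]

lemma walkEnd_walkReverse (a : Fin d → ℤ) (L : List (Move d)) :
    walkEnd (walkEnd a L) (walkReverse L) = a := by
  induction L generalizing a with
  | nil => rfl
  | cons p L ih => simp [walkReverse_cons, walkEnd_append, ih]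

lemma IsWalkIn.start_mem {a : Fin d → ℤ} {L : List (Move d)} (h : IsWalkIn S a L) : a ∈ S := by
  cases L with
  | nil => exact h
  | cons p L => exact h.1

lemma IsWalkIn.end_mem {a : Fin d → ℤ} {L : List (Move d)} (h : IsWalkIn S a L) :
    walkEnd a L ∈ S := by
  induction L generalizing a with
  | nil => exact h
  | cons p L ih => exact ih h.2

lemma isWalkIn_append {a : Fin d → ℤ} {L M : List (Move d)} :
    IsWalkIn S a (L ++ M) ↔ IsWalkIn S a L ∧ IsWalkIn S (walkEnd a L) M := by
  induction L generalizing a with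
  | nil => exact ⟨fun h => ⟨h.start_mem, h⟩, And.right⟩
  | cons p L ih => simp only [List.cons_append, IsWalkIn, walkEnd_cons, ih, and_assoc]

lemma IsWalkIn.reverse {a : Fin d → ℤ} {L : List (Move d)} (h : IsWalkIn S a L) :
    IsWalkIn S (walkEnd a L) (walkReverse L) := by
  induction L generalizing a with
  | nil => exact h
  | cons p L ih =>
    rw [walkReverse_cons, isWalkIn_append, walkEnd_cons, walkEnd_walkReverse]
    refine ⟨ih h.2, h.2.start_mem, ?_⟩
    simpa [IsWalkIn] using h.1

lemma Reachable.trans {a b c : Fin d → ℤ} (hab : Reachable S a b)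
    (hbc : Reachable S b c) : Reachable S a c := by
  obtain ⟨L, hL, rfl⟩ := hab
  obtain ⟨M, hM, rfl⟩ := hbc
  exact ⟨L ++ M, isWalkIn_append.2 ⟨hL, hM⟩, walkEnd_append a L M⟩

lemma Reachable.symm {a b : Fin d → ℤ} (h : Reachable S a b) :
    Reachable S b a := by
  obtain ⟨L, hL, rfl⟩ := h
  exact ⟨walkReverse L, hL.reverse, walkEnd_walkReverse a L⟩

lemma IsWalkIn.take {a : Fin d → ℤ} {L : List (Move d)} (h : IsWalkIn S a L) (ℓ : ℕ) :
    IsWalkIn S a (L.take ℓ) := by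
  induction L generalizing a ℓ with
  | nil => simpa using h
  | cons p L ih =>
    cases ℓ with
    | zero => exact h.start_mem
    | succ ℓ => exact ⟨h.1, ih h.2 ℓ⟩

lemma walkWeight_append (a : Fin d → ℤ) (L M : List (Move d)) :
    walkWeight lam mu a (L ++ M) = walkWeight lam mu a L * walkWeight lam mu (walkEnd a L) M := by
  induction L generalizing a with
  | nil => simp [walkWeight]
  | cons p L ih => simp [walkWeight, ih, mul_assoc]

lemma rho_reverse (p : Move d) (a : Fin d → ℤ) :
    rho lam mu p.reverse.1 p.reverse.2 (a + p.vec) = (rho lam mu p.1 p.2 a)⁻¹ := by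
  obtain ⟨s, j⟩ := p
  cases s <;> simp [rho, Move.reverse, Move.vec, ← sub_eq_add_neg]

lemma walkWeight_walkReverse (a : Fin d → ℤ) (L : List (Move d)) :
    walkWeight lam mu (walkEnd a L) (walkReverse L) = (walkWeight lam mu a L)⁻¹ := by
  induction L generalizing a with
  | nil => simp [walkReverse, walkWeight]
  | cons p L ih =>
    rw [walkReverse_cons, walkWeight_append, walkEnd_cons, ih, walkEnd_walkReverse]
    simp [walkWeight, rho_reverse, mul_comm]

lemma rho_pos (hlam : ∀ j, ∀ n ∈ S, 0 < lam j n) (hmu : ∀ j, ∀ n ∈ S, 0 < mu j n)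
    {p : Move d} {a : Fin d → ℤ} (ha : a ∈ S) (hb : a + p.vec ∈ S) :
    0 < rho lam mu p.1 p.2 a := by
  obtain ⟨s, j⟩ := p
  cases s with
  | true => exact div_pos (hlam j a ha) (hmu j _ (by simpa [Move.vec] using hb))
  | false =>
    exact div_pos (hmu j a ha) (hlam j _ (by simpa [Move.vec, ← sub_eq_add_neg] using hb))

lemma walkWeight_pos (hlam : ∀ j, ∀ n ∈ S, 0 < lam j n) (hmu : ∀ j, ∀ n ∈ S, 0 < mu j n)
    {a : Fin d → ℤ} {L : List (Move d)} (h : IsWalkIn S a L) :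
    0 < walkWeight lam mu a L := by
  induction L generalizing a with
  | nil => exact one_pos
  | cons p L ih => exact mul_pos (rho_pos hlam hmu h.1 h.2.start_mem) (ih h.2)

lemma walkEnd_take_succ (q : Move d) (a : Fin d → ℤ) {L : List (Move d)} {ℓ : ℕ}
    (hℓ : ℓ < L.length) :
    walkEnd a (L.take (ℓ + 1)) = walkEnd a (L.take ℓ) + (L.getD ℓ q).vec := by
  rw [List.take_add_one, List.getElem?_eq_getElem hℓ, List.getD_eq_getElem _ _ hℓ, walkEnd_append]
  rfl

lemma walkWeight_eq_prod (q : Move d) (a : Fin d → ℤ) (L : List (Move d)) :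
    walkWeight lam mu a L = ∏ ℓ ∈ Finset.range L.length,
      rho lam mu (L.getD ℓ q).1 (L.getD ℓ q).2 (walkEnd a (L.take ℓ)) := by
  induction L generalizing a with
  | nil => rfl
  | cons p L ih =>
    rw [List.length_cons, Finset.prod_range_succ', walkWeight, ih, mul_comm]
    rfl

end Walks

def CircuitCondition (S : Set (Fin d → ℤ)) (lam mu : Fin d → (Fin d → ℤ) → ℝ) : Prop :=
  ∀ (k : ℕ), 1 ≤ k → ∀ (n : ℕ → (Fin d → ℤ)) (j : ℕ → Fin d) (s : ℕ → Bool),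
    (∀ ℓ, ℓ ≤ k → n ℓ ∈ S) → n k = n 0 →
    (∀ ℓ, ℓ < k → n (ℓ + 1) = n ℓ + (if s ℓ then unitvec (j ℓ) else -unitvec (j ℓ))) →
    ∏ ℓ ∈ Finset.range k, rho lam mu (s ℓ) (j ℓ) (n ℓ) = 1

lemma CircuitCondition.walkWeight_eq_one {S : Set (Fin d → ℤ)}
    {lam mu : Fin d → (Fin d → ℤ) → ℝ} (H : CircuitCondition S lam mu) {a : Fin d → ℤ}
    {L : List (Move d)} (hL : IsWalkIn S a L) (hclosed : walkEnd a L = a) :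
    walkWeight lam mu a L = 1 := by
  rcases L with _ | ⟨q, L'⟩
  · rfl
  -- `q` only serves as the default of `getD`, which is consulted only past the end of the list
  rw [walkWeight_eq_prod q]
  exact H _ (Nat.succ_pos _) (fun ℓ => walkEnd a ((q :: L').take ℓ)) _ _
    (fun ℓ _ => (hL.take ℓ).end_mem) (by simpa using hclosed)
    (fun ℓ hℓ => walkEnd_take_succ q a hℓ)

def IsDetailedBalanceMeasure (S : Set (Fin d → ℤ)) (lam mu : Fin d → (Fin d → ℤ) → ℝ)
    (π : (Fin d → ℤ) → ℝ) : Prop :=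
  (∀ n ∈ S, 0 < π n) ∧ ∀ j, ∀ n ∈ S, n + unitvec j ∈ S →
    π n * lam j n = mu j (n + unitvec j) * π (n + unitvec j)

section DetailedBalance

variable {S : Set (Fin d → ℤ)} {lam mu : Fin d → (Fin d → ℤ) → ℝ}

lemma IsDetailedBalanceMeasure.rho_mul_eq {π : (Fin d → ℤ) → ℝ}
    (hπ : IsDetailedBalanceMeasure S lam mu π)
    (hlam : ∀ j, ∀ n ∈ S, 0 < lam j n) (hmu : ∀ j, ∀ n ∈ S, 0 < mu j n)
    {p : Move d} {a : Fin d → ℤ} (ha : a ∈ S) (hb : a + p.vec ∈ S) :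
    rho lam mu p.1 p.2 a * π a = π (a + p.vec) := by
  obtain ⟨s, j⟩ := p
  cases s with
  | true =>
    have hb : a + unitvec j ∈ S := hb
    have := hπ.2 j a ha hb
    have := (hmu j _ hb).ne'
    simp only [rho, Move.vec, if_true]
    field_simp
    linarith
  | false =>
    have hb : a - unitvec j ∈ S := by simpa [Move.vec, ← sub_eq_add_neg] using hb
    have hbalance := hπ.2 j _ hb (by simpa using ha)
    rw [sub_add_cancel] at hbalance
    have := (hlam j _ hb).ne'
    simp only [rho, Move.vec, Bool.false_eq_true, if_false, ← sub_eq_add_neg]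
    field_simp
    linarith

lemma IsDetailedBalanceMeasure.circuitCondition {π : (Fin d → ℤ) → ℝ}
    (hπ : IsDetailedBalanceMeasure S lam mu π)
    (hlam : ∀ j, ∀ n ∈ S, 0 < lam j n) (hmu : ∀ j, ∀ n ∈ S, 0 < mu j n) :
    CircuitCondition S lam mu := by
  intro k hk n j s hmem hclosed hstep
  have telescope : ∀ m ≤ k,
      (∏ ℓ ∈ Finset.range m, rho lam mu (s ℓ) (j ℓ) (n ℓ)) * π (n 0) = π (n m) := by
    intro m hm
    induction m with
    | zero => simp
    | succ m ih =>
      rw [Finset.prod_range_succ, mul_right_comm, ih (by omega), mul_comm, hstep m hm]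
      exact hπ.rho_mul_eq hlam hmu (p := (s m, j m)) (hmem m (by omega))
        (hstep m hm ▸ hmem (m + 1) hm)
  have h0 := (hπ.1 _ (hmem 0 (Nat.zero_le k))).ne'
  simpa [hclosed, h0] using telescope k le_rfl

lemma CircuitCondition.walkWeight_eq (H : CircuitCondition S lam mu)
    (hlam : ∀ j, ∀ n ∈ S, 0 < lam j n) (hmu : ∀ j, ∀ n ∈ S, 0 < mu j n)
    {a : Fin d → ℤ} {L M : List (Move d)} (hL : IsWalkIn S a L) (hM : IsWalkIn S a M)
    (hend : walkEnd a L = walkEnd a M) :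
    walkWeight lam mu a L = walkWeight lam mu a M := by
  have hloop : IsWalkIn S a (L ++ walkReverse M) :=
    isWalkIn_append.2 ⟨hL, hend ▸ hM.reverse⟩
  have h := H.walkWeight_eq_one hloop (by rw [walkEnd_append, hend, walkEnd_walkReverse])
  rw [walkWeight_append, hend, walkWeight_walkReverse] at h
  have := (walkWeight_pos hlam hmu hM).ne'
  field_simp at h
  exact h

lemma CircuitCondition.exists_isDetailedBalanceMeasure (H : CircuitCondition S lam mu)
    (hlam : ∀ j, ∀ n ∈ S, 0 < lam j n) (hmu : ∀ j, ∀ n ∈ S, 0 < mu j n)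
    (hconn : ∀ a ∈ S, ∀ b ∈ S, Reachable S a b) :
    ∃ π, IsDetailedBalanceMeasure S lam mu π := by
  classical
  rcases S.eq_empty_or_nonempty with rfl | ⟨a, ha⟩
  · exact ⟨1, by simp [IsDetailedBalanceMeasure]⟩
  choose L hL using hconn a ha
  refine ⟨fun b => if hb : b ∈ S then walkWeight lam mu a (L b hb) else 1,
    fun b hb => ?_, fun j b hb hb' => ?_⟩
  · simpa only [dif_pos hb] using walkWeight_pos hlam hmu (hL b hb).1
  · obtain ⟨hLb, hendb⟩ := hL b hb
    have hstep : IsWalkIn S (walkEnd a (L b hb)) [(true, j)] := by rw [hendb]; exact ⟨hb, hb'⟩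
    have hext : walkWeight lam mu a (L _ hb') = walkWeight lam mu a (L b hb ++ [(true, j)]) :=
      H.walkWeight_eq hlam hmu (hL _ hb').1 (isWalkIn_append.2 ⟨hLb, hstep⟩)
        (by rw [(hL _ hb').2, walkEnd_append, hendb]; rfl)
    simp only [dif_pos hb, dif_pos hb', hext, walkWeight_append, hendb]
    have := (hmu j _ hb').ne'
    simp only [walkWeight, rho, if_true, mul_one]
    field_simp

end DetailedBalance

lemma reachable_add_nsmul_unitvec {a : Fin d → ℤ} (ha : a ∈ E d) (j : Fin d) (k : ℕ) :
    Reachable (E d) a (a + k • unitvec j) := by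
  induction k with
  | zero => exact ⟨[], ha, by simp⟩
  | succ k ih =>
    have hmem : a + k • unitvec j ∈ E d := by
      obtain ⟨L, hL, hend⟩ := ih
      exact hend ▸ hL.end_mem
    refine ih.trans ⟨[(true, j)], ⟨hmem, add_unitvec_mem hmem j⟩, ?_⟩
    show a + k • unitvec j + unitvec j = a + (k + 1) • unitvec j
    rw [succ_nsmul, add_assoc]

lemma reachable_add_of_nonneg {a m : Fin d → ℤ} (ha : a ∈ E d) (hm : ∀ i, 0 ≤ m i) :
    Reachable (E d) a (a + m) := by
  have key : ∀ s : Finset (Fin d),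
      Reachable (E d) a (a + ∑ i ∈ s, (m i).toNat • unitvec i) := by
    intro s
    induction s using Finset.induction_on with
    | empty => exact ⟨[], ha, by simp⟩
    | insert i s hi ih =>
      have hmem : a + ∑ i ∈ s, (m i).toNat • unitvec i ∈ E d := by
        obtain ⟨L, hL, hend⟩ := ih
        exact hend ▸ hL.end_mem
      rw [Finset.sum_insert hi, add_comm _ (∑ i ∈ s, _), ← add_assoc]
      exact ih.trans (reachable_add_nsmul_unitvec hmem i _)
  have hsum : ∑ i, (m i).toNat • unitvec i = m := by
    funext x
    simpa [unitvec, Finset.sum_apply] using hm x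
  exact hsum ▸ key Finset.univ

lemma reachable_of_mem_E {a b : Fin d → ℤ} (ha : a ∈ E d) (hb : b ∈ E d) :
    Reachable (E d) a b :=
  (reachable_add_of_nonneg ha hb.1).trans (add_comm a b ▸ (reachable_add_of_nonneg hb ha.1).symm)

end SelfAdjointBD

theorem detailed_balance_measure_exists_iff_circuit_condition_general (d : ℕ)
    (lam mu : Fin d → (Fin d → ℤ) → ℝ)
    (hlam : ∀ j, ∀ n ∈ E d, 0 < lam j n) (hmu : ∀ j, ∀ n ∈ E d, 0 < mu j n) :
    (∃ π : (Fin d → ℤ) → ℝ, (∀ n ∈ E d, 0 < π n) ∧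
        ∀ j : Fin d, ∀ n ∈ E d,
          π n * lam j n = mu j (n + unitvec j) * π (n + unitvec j))
      ↔ (∀ (k : ℕ), 1 ≤ k → ∀ (n : ℕ → (Fin d → ℤ)) (j : ℕ → Fin d) (s : ℕ → Bool),
          (∀ ℓ, ℓ ≤ k → n ℓ ∈ E d) → n k = n 0 →
          (∀ ℓ, ℓ < k →
            n (ℓ + 1) = n ℓ + (if s ℓ then unitvec (j ℓ) else -unitvec (j ℓ))) →
          ∏ ℓ ∈ Finset.range k, rho lam mu (s ℓ) (j ℓ) (n ℓ) = 1) := by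
  constructor
  · rintro ⟨π, hπ, hbalance⟩
    exact IsDetailedBalanceMeasure.circuitCondition 
      ⟨hπ, fun j n hn _ => hbalance j n hn⟩ hlam hmu
  · intro H
    obtain ⟨π, hπ, hbalance⟩ := CircuitCondition.exists_isDetailedBalanceMeasure H hlam hmu
      fun a ha b hb => reachable_of_mem_E ha hb
    exact ⟨π, hπ, fun j n hn => hbalance j n hn (add_unitvec_mem hn j)⟩

/-- Kolmogorov-type criterion: assuming all rates are positive on `E`,
a positive function `π` on `E` satisfying the detailed-balance relations
`π(n)·λ_j(n) = μ_j(n+e_j)·π(n+e_j)` exists if and only if for every circuit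
`(n⁽¹⁾, …, n⁽ᵏ⁾, n⁽ᵏ⁺¹⁾)` contained in `E` the product `∏_{ℓ=1}^{k} ρ(ε^{(j_ℓ)}, n⁽ˡ⁾)`
equals `1`. -/
theorem detailed_balance_measure_exists_iff_circuit_condition (d : ℕ) (hd : 1 ≤ d)
    (lam mu : Fin d → (Fin d → ℤ) → ℝ)
    (hlam : ∀ j, ∀ n ∈ E d, 0 < lam j n) (hmu : ∀ j, ∀ n ∈ E d, 0 < mu j n) :
    (∃ π : (Fin d → ℤ) → ℝ, (∀ n ∈ E d, 0 < π n) ∧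
        ∀ j : Fin d, ∀ n ∈ E d,
          π n * lam j n = mu j (n + unitvec j) * π (n + unitvec j))
      ↔ (∀ (k : ℕ), 1 ≤ k → ∀ (n : ℕ → (Fin d → ℤ)) (j : ℕ → Fin d) (s : ℕ → Bool),
          (∀ ℓ, ℓ ≤ k → n ℓ ∈ E d) → n k = n 0 →
          (∀ ℓ, ℓ < k →
            n (ℓ + 1) = n ℓ + (if s ℓ then unitvec (j ℓ) else -unitvec (j ℓ))) →
          ∏ ℓ ∈ Finset.range k, rho lam mu (s ℓ) (j ℓ) (n ℓ) = 1) :=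
  detailed_balance_measure_exists_iff_circuit_condition_general d lam mu hlam hmu
end
end

section
/- The equality [λ_1(n)/μ_1(n+e₁)] · [λ_2(n+e₁)/μ_2(n+e₁+e₂)] · [μ_1(n+e₁+e₂)/λ_1(n+e₂)] · [μ_2(n+e₂)/λ_2(n)] = 1 holds for every n = (n₁, n₂) with n₁ ≥ 1 and n₂ ≥ 1 if and only if c₁₁ = c₁₂, c₂₁ = c₂₂ and μ₁·c₂₁ = μ₂·c₁₂. -/
noncomputable section

namespace TwoTypeLV

/-- Birth rate of type 1: `λ_1(n₁,n₂) = λ₁·n₁`. -/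
def lamRate1 (lam1 : ℝ) (n1 n2 : ℕ) : ℝ := lam1 * n1

/-- Death rate of type 1: `μ_1(n₁,n₂) = n₁·(μ₁ + c₁₁·n₁ + c₁₂·n₂)`. -/
def muRate1 (mu1 c11 c12 : ℝ) (n1 n2 : ℕ) : ℝ := n1 * (mu1 + c11 * n1 + c12 * n2)

/-- Birth rate of type 2: `λ_2(n₁,n₂) = λ₂·n₂`. -/
def lamRate2 (lam2 : ℝ) (n1 n2 : ℕ) : ℝ := lam2 * n2

/-- Death rate of type 2: `μ_2(n₁,n₂) = n₂·(μ₂ + c₂₁·n₁ + c₂₂·n₂)`. -/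
def muRate2 (mu2 c21 c22 : ℝ) (n1 n2 : ℕ) : ℝ := n2 * (mu2 + c21 * n1 + c22 * n2)

end TwoTypeLV

open TwoTypeLV

/-! Since `λ_1` ignores `n₂` and `λ_2` ignores `n₁`, the birth rates cancel from the circuit ratio,
and so do the factors `n₁ + 1`, `n₂ + 1` of the death rates. What remains is the balance
`c₂₁ (μ₁ + c₁₁ (n₁+1) + c₁₂ n₂) = c₁₂ (μ₂ + c₂₁ n₁ + c₂₂ (n₂+1))`, an affine identity in `(n₁, n₂)`;
it holds on the whole quadrant `n₁, n₂ ≥ 1` iff its three coefficients vanish. -/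

theorem div_mul_div_mul_div_mul_div_eq_one_iff {K : Type*} [Field K] {a b p q x y : K}
    (ha : a ≠ 0) (hb : b ≠ 0) (hp : p ≠ 0) (hqy : q + y ≠ 0) :
    a / p * (b / (q + y)) * ((p + x) / a) * (q / b) = 1 ↔ x * q = y * p := by
  field_simp
  constructor <;> intro h <;> linear_combination h

theorem affine_eq_zero_on_quadrant_iff {R : Type*} [CommRing R] (a b c : R) :
    (∀ n1 n2 : ℕ, 1 ≤ n1 → 1 ≤ n2 → a + b * n1 + c * n2 = 0) ↔ a = 0 ∧ b = 0 ∧ c = 0 := by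
  refine ⟨fun h ↦ ?_, by rintro ⟨rfl, rfl, rfl⟩; simp⟩
  have h11 := h 1 1 le_rfl le_rfl
  have h21 := h 2 1 one_le_two le_rfl
  have h12 := h 1 2 le_rfl one_le_two
  push_cast at h11 h21 h12
  exact ⟨by linear_combination 3 * h11 - h21 - h12, by linear_combination h21 - h11,
    by linear_combination h12 - h11⟩

namespace TwoTypeLV

variable (lam1 lam2 mu1 mu2 c11 c12 c21 c22 : ℝ)

def circuitRatio (n1 n2 : ℕ) : ℝ :=
  (lamRate1 lam1 n1 n2 / muRate1 mu1 c11 c12 (n1 + 1) n2)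
    * (lamRate2 lam2 (n1 + 1) n2 / muRate2 mu2 c21 c22 (n1 + 1) (n2 + 1))
    * (muRate1 mu1 c11 c12 (n1 + 1) (n2 + 1) / lamRate1 lam1 n1 (n2 + 1))
    * (muRate2 mu2 c21 c22 n1 (n2 + 1) / lamRate2 lam2 n1 n2)

variable {lam1 lam2 mu1 mu2 c11 c12 c21 c22}

theorem lamRate1_succ_right (n1 n2 : ℕ) : lamRate1 lam1 n1 (n2 + 1) = lamRate1 lam1 n1 n2 := rfl

theorem lamRate2_succ_left (n1 n2 : ℕ) : lamRate2 lam2 (n1 + 1) n2 = lamRate2 lam2 n1 n2 := rfl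

theorem muRate1_succ_succ (n1 n2 : ℕ) :
    muRate1 mu1 c11 c12 (n1 + 1) (n2 + 1) =
      muRate1 mu1 c11 c12 (n1 + 1) n2 + (n1 + 1) * c12 := by
  simp only [muRate1]; push_cast; ring

theorem muRate2_succ_succ (n1 n2 : ℕ) :
    muRate2 mu2 c21 c22 (n1 + 1) (n2 + 1) =
      muRate2 mu2 c21 c22 n1 (n2 + 1) + (n2 + 1) * c21 := by
  simp only [muRate2]; push_cast; ring

theorem muRate1_pos (hmu1 : 0 ≤ mu1) (hc11 : 0 ≤ c11) (hc12 : 0 < c12)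
    {n1 n2 : ℕ} (h1 : 1 ≤ n1) (h2 : 1 ≤ n2) : 0 < muRate1 mu1 c11 c12 n1 n2 := by
  have hn1 : (1 : ℝ) ≤ n1 := by exact_mod_cast h1
  have hn2 : (1 : ℝ) ≤ n2 := by exact_mod_cast h2
  unfold muRate1
  positivity

theorem muRate2_pos (hmu2 : 0 ≤ mu2) (hc22 : 0 ≤ c22) (hc21 : 0 < c21)
    {n1 n2 : ℕ} (h1 : 1 ≤ n1) (h2 : 1 ≤ n2) : 0 < muRate2 mu2 c21 c22 n1 n2 := by
  have hn1 : (1 : ℝ) ≤ n1 := by exact_mod_cast h1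
  have hn2 : (1 : ℝ) ≤ n2 := by exact_mod_cast h2
  unfold muRate2
  positivity

theorem circuitRatio_eq_one_iff (hlam1 : 0 < lam1) (hlam2 : 0 < lam2)
    (hmu1 : 0 ≤ mu1) (hmu2 : 0 ≤ mu2) (hc11 : 0 ≤ c11) (hc22 : 0 ≤ c22)
    (hc12 : 0 < c12) (hc21 : 0 < c21)
    {n1 n2 : ℕ} (h1 : 1 ≤ n1) (h2 : 1 ≤ n2) :
    circuitRatio lam1 lam2 mu1 mu2 c11 c12 c21 c22 n1 n2 = 1 ↔
      (c12 * (mu2 + c22) - c21 * (mu1 + c11)) + c21 * (c12 - c11) * n1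
        + c12 * (c22 - c21) * n2 = 0 := by
  have hn1 : (0 : ℝ) < n1 := by exact_mod_cast h1
  have hn2 : (0 : ℝ) < n2 := by exact_mod_cast h2
  have hmu1_pos := muRate1_pos hmu1 hc11 hc12 (Nat.le_add_left 1 n1) h2
  have hmu2_pos := muRate2_pos hmu2 hc22 hc21 (Nat.le_add_left 1 n1) (Nat.le_add_left 1 n2)
  have hlam1_ne : lamRate1 lam1 n1 n2 ≠ 0 := by unfold lamRate1; positivity
  have hlam2_ne : lamRate2 lam2 n1 n2 ≠ 0 := by unfold lamRate2; positivity
  have hsucc : ((n1 : ℝ) + 1) * (n2 + 1) ≠ 0 := by positivity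
  rw [circuitRatio, muRate1_succ_succ, muRate2_succ_succ, lamRate1_succ_right, lamRate2_succ_left,
    div_mul_div_mul_div_mul_div_eq_one_iff hlam1_ne hlam2_ne hmu1_pos.ne'
      (muRate2_succ_succ .. ▸ hmu2_pos.ne')]
  simp only [muRate1, muRate2]
  push_cast
  constructor <;> intro h
  · refine (mul_eq_zero.1 ?_).resolve_left hsucc
    linear_combination h
  · linear_combination (((n1 : ℝ) + 1) * (n2 + 1)) * h

end TwoTypeLV

/-- for the two-type competition model, the circuit condition
`[λ_1(n)/μ_1(n+e₁)]·[λ_2(n+e₁)/μ_2(n+e₁+e₂)]·[μ_1(n+e₁+e₂)/λ_1(n+e₂)]·[μ_2(n+e₂)/λ_2(n)] = 1`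
for all `n = (n₁,n₂)` with `n₁ ≥ 1`, `n₂ ≥ 1` holds if and only if
`c₁₁ = c₁₂`, `c₂₁ = c₂₂` and `μ₁·c₂₁ = μ₂·c₁₂`. -/
theorem twotype_circuit_condition_iff (lam1 lam2 mu1 mu2 c11 c12 c21 c22 : ℝ)
    (hlam1 : 0 < lam1) (hlam2 : 0 < lam2) (hmu1 : 0 ≤ mu1) (hmu2 : 0 ≤ mu2)
    (hc11 : 0 ≤ c11) (hc22 : 0 ≤ c22) (hc12 : 0 < c12) (hc21 : 0 < c21) :
    (∀ n1 n2 : ℕ, 1 ≤ n1 → 1 ≤ n2 →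
        (lamRate1 lam1 n1 n2 / muRate1 mu1 c11 c12 (n1 + 1) n2)
          * (lamRate2 lam2 (n1 + 1) n2 / muRate2 mu2 c21 c22 (n1 + 1) (n2 + 1))
          * (muRate1 mu1 c11 c12 (n1 + 1) (n2 + 1) / lamRate1 lam1 n1 (n2 + 1))
          * (muRate2 mu2 c21 c22 n1 (n2 + 1) / lamRate2 lam2 n1 n2) = 1)
      ↔ (c11 = c12 ∧ c21 = c22 ∧ mu1 * c21 = mu2 * c12) := calc
  _ ↔ ∀ n1 n2 : ℕ, 1 ≤ n1 → 1 ≤ n2 → (c12 * (mu2 + c22) - c21 * (mu1 + c11))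
        + c21 * (c12 - c11) * n1 + c12 * (c22 - c21) * n2 = 0 :=
    forall₄_congr fun _ _ h1 h2 ↦
      circuitRatio_eq_one_iff hlam1 hlam2 hmu1 hmu2 hc11 hc22 hc12 hc21 h1 h2
  _ ↔ c12 * (mu2 + c22) - c21 * (mu1 + c11) = 0 ∧ c21 * (c12 - c11) = 0
        ∧ c12 * (c22 - c21) = 0 := affine_eq_zero_on_quadrant_iff _ _ _
  _ ↔ c11 = c12 ∧ c21 = c22 ∧ mu1 * c21 = mu2 * c12 := by
    simp only [mul_eq_zero, hc12.ne', hc21.ne', false_or, sub_eq_zero]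
    constructor
    · rintro ⟨h, rfl, rfl⟩
      exact ⟨rfl, rfl, by linear_combination -h⟩
    · rintro ⟨rfl, rfl, h⟩
      exact ⟨by linear_combination -h, rfl, rfl⟩
end
end

section
/- Let X be a complex Banach space, T : X → X a continuous linear map, ν ∈ X with ν ≠ 0, λ₀ ∈ ℂ, and r, C ≥ 0 with r < |λ₀|. Assume T ν = λ₀ ν and that for every n ∈ ℕ there exists a continuous linear functional ℓ_n on X such that the operator norm of T^n − (f ↦ ℓ_n(f)·ν) is at most C·rⁿ. Then: (i) for every z ∈ ℂ with |z| > r, every f ∈ X with f ≠ 0 and T f = z f is a scalar multiple of ν (and consequently z = λ₀); (ii) there exists no f ∈ X with T f − λ₀ f = ν. -/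
/-! Dividing `T ^ n f` by `w ^ n`, the rank-one approximation of `T ^ n` shows that an
eigenvector `f` for an eigenvalue `w` with `r < ‖w‖` lies within `O((r / ‖w‖) ^ n)` of the line
`ℂ ∙ ν`; since that line is closed, `f` lies on it. The same holds for a generalized eigenvector
`T f = l₀ • f + ν`, because `T ^ n f = l₀ ^ n • f + (n * l₀ ^ (n - 1)) • ν` differs from
`l₀ ^ n • f` only by a multiple of `ν`; but on the line `T - l₀` vanishes, so it cannot hit `ν`. -/

open Filter Topology

namespace ContinuousLinearMap

section Powers

variable {R M : Type*} [CommSemiring R] [AddCommMonoid M] [Module R M] [TopologicalSpace M]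
  {T : M →L[R] M}

theorem pow_apply_of_apply_eq_smul {z : R} {f : M} (hf : T f = z • f) (n : ℕ) :
    (T ^ n) f = z ^ n • f := by
  induction n with
  | zero => simp
  | succ n ih => rw [pow_succ', mul_apply_eq_comp, ih, map_smul, hf, smul_smul, pow_succ]

theorem pow_apply_of_apply_eq_smul_add {l₀ : R} {ν f : M} (hν : T ν = l₀ • ν)
    (hf : T f = l₀ • f + ν) (n : ℕ) :
    (T ^ n) f = l₀ ^ n • f + ((n : R) * l₀ ^ (n - 1)) • ν := by
  induction n with
  | zero => simp
  | succ n ih =>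
    rw [pow_succ', mul_apply_eq_comp, ih, map_add, map_smul, map_smul, hf, hν]
    rcases n with _ | n
    · simp
    · simp only [smul_add, smul_smul, add_assoc, ← add_smul]
      congr 2 <;> push_cast <;> ring

end Powers

theorem mem_span_singleton_of_pow_apply_eq {𝕜 X : Type*} [NontriviallyNormedField 𝕜]
    [CompleteSpace 𝕜] [NormedAddCommGroup X] [NormedSpace 𝕜 X]
    {T : X →L[𝕜] X} {ν f : X} {w : 𝕜} {r C : ℝ} (hr : 0 ≤ r) (hrw : r < ‖w‖)
    (happrox : ∀ n : ℕ, ∃ ℓ : X →L[𝕜] 𝕜, ‖T ^ n - ℓ.smulRight ν‖ ≤ C * r ^ n)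
    {a : ℕ → 𝕜} (hf : ∀ n, (T ^ n) f = w ^ n • f + a n • ν) : f ∈ 𝕜 ∙ ν := by
  choose ℓ hℓ using happrox
  have hw : 0 < ‖w‖ := hr.trans_lt hrw
  have hgeom : Tendsto (fun n : ℕ => C * ‖f‖ * (r / ‖w‖) ^ n) atTop (𝓝 0) := by
    simpa using (tendsto_pow_atTop_nhds_zero_of_lt_one (div_nonneg hr hw.le)
      ((div_lt_one hw).2 hrw)).const_mul (C * ‖f‖)
  have hclose (n : ℕ) : ‖f - ((w ^ n)⁻¹ * (ℓ n f - a n)) • ν‖ ≤ C * ‖f‖ * (r / ‖w‖) ^ n := by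
    have hwn : w ^ n ≠ 0 := pow_ne_zero _ (norm_pos_iff.1 hw)
    have herr : f - ((w ^ n)⁻¹ * (ℓ n f - a n)) • ν
        = (w ^ n)⁻¹ • (T ^ n - (ℓ n).smulRight ν) f := by
      rw [sub_apply, hf n, smulRight_apply]
      match_scalars <;> field_simp
      ring
    rw [herr, norm_smul, norm_inv, norm_pow, inv_mul_le_iff₀ (by positivity)]
    calc ‖(T ^ n - (ℓ n).smulRight ν) f‖ ≤ C * r ^ n * ‖f‖ :=
          (le_opNorm _ f).trans (by gcongr; exact hℓ n)
      _ = _ := by rw [div_pow]; field_simp [hw.ne']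
  exact (Submodule.closed_of_finiteDimensional _).mem_of_tendsto
    (tendsto_iff_norm_sub_tendsto_zero.2 (squeeze_zero (fun _ => norm_nonneg _)
      (fun n => (norm_sub_rev _ _).trans_le (hclose n)) hgeom))
    (Eventually.of_forall fun n => Submodule.smul_mem _ _ (Submodule.mem_span_singleton_self ν))

end ContinuousLinearMap

theorem rank_one_approximation_spectral_lemma_general
    (X : Type*) [NormedAddCommGroup X] [NormedSpace ℂ X]
    (T : X →L[ℂ] X) (ν : X) (hν : ν ≠ 0) (l₀ : ℂ) (r C : ℝ)
    (hr : 0 ≤ r) (hrl : r < ‖l₀‖)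
    (hTν : T ν = l₀ • ν)
    (happrox : ∀ n : ℕ, ∃ ℓ : X →L[ℂ] ℂ, ‖T ^ n - ℓ.smulRight ν‖ ≤ C * r ^ n) :
    (∀ z : ℂ, r < ‖z‖ → ∀ f : X, f ≠ 0 → T f = z • f →
        (∃ c : ℂ, f = c • ν) ∧ z = l₀)
      ∧ ¬ ∃ f : X, T f - l₀ • f = ν := by
  refine ⟨fun z hz f hf hTf => ?_, fun ⟨f, hf⟩ => ?_⟩
  · obtain ⟨c, rfl⟩ := Submodule.mem_span_singleton.1 <|
      ContinuousLinearMap.mem_span_singleton_of_pow_apply_eq (f := f) (a := 0) hr hz happrox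
        fun n => by
          rw [ContinuousLinearMap.pow_apply_of_apply_eq_smul hTf, Pi.zero_apply, zero_smul,
            add_zero]
    exact ⟨⟨c, rfl⟩, smul_left_injective ℂ hf <|
      hTf.symm.trans (by rw [map_smul, hTν, smul_comm])⟩
  · have hTf : T f = l₀ • f + ν := by rw [← hf]; abel
    obtain ⟨d, rfl⟩ := Submodule.mem_span_singleton.1 <|
      ContinuousLinearMap.mem_span_singleton_of_pow_apply_eq hr hrl happrox
        (ContinuousLinearMap.pow_apply_of_apply_eq_smul_add hTν hTf)
    exact hν (by rw [← hf, map_smul, hTν, smul_comm, sub_self])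

/-- abstract spectral lemma: let `X` be a complex Banach space,
`T : X → X` continuous linear, `ν ≠ 0`, `l₀ ∈ ℂ`, `r, C ≥ 0` with `r < |l₀|`. Assume
`T ν = l₀ ν` and that for every `n` there is a continuous linear functional `ℓ_n` with
`‖T^n − (f ↦ ℓ_n(f)·ν)‖ ≤ C·rⁿ`. Then (i) for every `z` with `|z| > r`, every nonzero
eigenvector `f` of `T` with eigenvalue `z` is a scalar multiple of `ν` and `z = l₀`;
(ii) there is no `f` with `T f − l₀ f = ν`. -/
theorem rank_one_approximation_spectral_lemma
    (X : Type*) [NormedAddCommGroup X] [NormedSpace ℂ X] [CompleteSpace X]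
    (T : X →L[ℂ] X) (ν : X) (hν : ν ≠ 0) (l₀ : ℂ) (r C : ℝ)
    (hr : 0 ≤ r) (hC : 0 ≤ C) (hrl : r < ‖l₀‖)
    (hTν : T ν = l₀ • ν)
    (happrox : ∀ n : ℕ, ∃ ℓ : X →L[ℂ] ℂ, ‖T ^ n - ℓ.smulRight ν‖ ≤ C * r ^ n) :
    (∀ z : ℂ, r < ‖z‖ → ∀ f : X, f ≠ 0 → T f = z • f →
        (∃ c : ℂ, f = c • ν) ∧ z = l₀)
      ∧ ¬ ∃ f : X, T f - l₀ • f = ν :=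
  rank_one_approximation_spectral_lemma_general X T ν hν l₀ r C hr hrl hTν happrox
end

section
/- Let η > 1 and δ > 0 satisfy δ·η < 1, and let (f_n)_{n≥0} and (g_n)_{n≥0} be sequences of nonnegative real numbers with f₀ ≤ 1, g_{n−1} ≤ η·g_n for all n ≥ 1, and f_n ≤ η·g_n + δ·f_{n−1} for all n ≥ 1. Then f_n ≤ δⁿ + (η/(1 − δ·η))·g_n for all n ≥ 0. -/
/-!
Since `C := η / (1 - δη)` solves `C = η + δηC`, the sequence `δⁿ + C gₙ` is a supersolution of
the recursion `xₙ₊₁ = η gₙ₊₁ + δ xₙ` once `gₙ ≤ η gₙ₊₁`, while `f` is a subsolution; the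
recursion is monotone in `xₙ` because `δ ≥ 0`, so induction compares the two.
-/

theorem add_mul_div_one_sub_self {K : Type*} [Field K] {x : K} (hx : x ≠ 1) (a : K) :
    a + x * (a / (1 - x)) = a / (1 - x) := by
  have : 1 - x ≠ 0 := sub_ne_zero.2 hx.symm
  field_simp
  ring

theorem le_of_le_add_mul_of_add_mul_le {R : Type*} [Semiring R] [PartialOrder R]
    [IsOrderedRing R] {u v a : ℕ → R} {δ : R} (hδ : 0 ≤ δ) (h₀ : u 0 ≤ v 0)
    (hu : ∀ n, u (n + 1) ≤ a n + δ * u n) (hv : ∀ n, a n + δ * v n ≤ v (n + 1)) :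
    ∀ n, u n ≤ v n
  | 0 => h₀
  | n + 1 => (hu n).trans <|
      (add_le_add_right (mul_le_mul_of_nonneg_left
        (le_of_le_add_mul_of_add_mul_le hδ h₀ hu hv n) hδ) _).trans (hv n)

theorem recursive_sequence_bound_general (η δ : ℝ) (hη : 1 < η) (hδ : 0 < δ) (hδη : δ * η < 1)
    (f g : ℕ → ℝ) (hg : ∀ n, 0 ≤ g n) (hf0 : f 0 ≤ 1)
    (hgrec : ∀ n : ℕ, 1 ≤ n → g (n - 1) ≤ η * g n)
    (hfrec : ∀ n : ℕ, 1 ≤ n → f n ≤ η * g n + δ * f (n - 1)) :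
    ∀ n : ℕ, f n ≤ δ ^ n + (η / (1 - δ * η)) * g n := by
  set C := η / (1 - δ * η)
  have hC : 0 ≤ C := div_nonneg (by linarith) (by linarith)
  have hfix : η + δ * η * C = C := add_mul_div_one_sub_self hδη.ne η
  refine le_of_le_add_mul_of_add_mul_le (a := fun n ↦ η * g (n + 1)) hδ.le ?_
    (fun n ↦ hfrec (n + 1) n.succ_pos) fun n ↦ ?_
  · simpa using le_add_of_le_of_nonneg hf0 (mul_nonneg hC (hg 0))
  · calc η * g (n + 1) + δ * (δ ^ n + C * g n)
        ≤ η * g (n + 1) + δ * (δ ^ n + C * (η * g (n + 1))) := by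
          gcongr
          exact hgrec (n + 1) n.succ_pos
      _ = δ ^ (n + 1) + (η + δ * η * C) * g (n + 1) := by ring
      _ = δ ^ (n + 1) + C * g (n + 1) := by rw [hfix]

/-- recursive sequence inequality: if `η > 1`, `δ > 0`, `δ·η < 1`, and
`(f_n)`, `(g_n)` are nonnegative sequences with `f₀ ≤ 1`, `g_{n−1} ≤ η·g_n` and
`f_n ≤ η·g_n + δ·f_{n−1}` for all `n ≥ 1`, then `f_n ≤ δⁿ + (η/(1 − δ·η))·g_n` for all `n`. -/
theorem recursive_sequence_bound (η δ : ℝ) (hη : 1 < η) (hδ : 0 < δ) (hδη : δ * η < 1)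
    (f g : ℕ → ℝ) (hf : ∀ n, 0 ≤ f n) (hg : ∀ n, 0 ≤ g n) (hf0 : f 0 ≤ 1)
    (hgrec : ∀ n : ℕ, 1 ≤ n → g (n - 1) ≤ η * g n)
    (hfrec : ∀ n : ℕ, 1 ≤ n → f n ≤ η * g n + δ * f (n - 1)) :
    ∀ n : ℕ, f n ≤ δ ^ n + (η / (1 - δ * η)) * g n :=
  recursive_sequence_bound_general η δ hη hδ hδη f g hg hf0 hgrec hfrec
end

section
/- Let p ∈ ℕ and let Λ : ℕ → [0,∞) and M : ℕ → (0,∞) satisfy Λ(q) ≤ M(q)/2 for all q > p, and suppose Σ_{m > p} 1/M(m) < ∞. Then Σ_{m=p+1}^{∞} [ 1/M(m) + Σ_{i=m+1}^{∞} (Λ(m)·Λ(m+1)⋯Λ(i−1)) / (M(m)·M(m+1)⋯M(i)) ] ≤ 2 · Σ_{m=p+1}^{∞} 1/M(m). -/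
/-!
Above level `p` every birth rate is at most half the death rate, so the `i`-th inner term of the
`m`-th summand is at most `2^{-(i-m)} / M(i)`. The `m`-th summand is therefore dominated by
`∑_{j ≥ 0} 2^{-j} / M(m + j)`, and summing over `m` and exchanging the order of summation bounds
the whole series by `(∑_j 2^{-j}) · ∑_{m > p} 1/M(m) = 2 ∑_{m > p} 1/M(m)`.
-/

open scoped ENNReal

open Finset

theorem prod_Ico_div_prod_Icc_le_pow_div {Λ M : ℕ → ℝ} {r : ℝ} (m n : ℕ)
    (hΛ : ∀ t ∈ Ico m (m + n), 0 ≤ Λ t) (hM : ∀ t ∈ Icc m (m + n), 0 < M t)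
    (hΛM : ∀ t ∈ Ico m (m + n), Λ t ≤ M t * r) :
    (∏ t ∈ Ico m (m + n), Λ t) / ∏ t ∈ Icc m (m + n), M t ≤ r ^ n / M (m + n) := by
  have hM_top : 0 < M (m + n) := hM _ (right_mem_Icc.2 (Nat.le_add_right m n))
  have hM_Ico : 0 < ∏ t ∈ Ico m (m + n), M t :=
    prod_pos fun t ht => hM t (Ico_subset_Icc_self ht)
  have hprod : ∏ t ∈ Ico m (m + n), Λ t ≤ (∏ t ∈ Ico m (m + n), M t) * r ^ n := by
    calc ∏ t ∈ Ico m (m + n), Λ t ≤ ∏ t ∈ Ico m (m + n), M t * r := prod_le_prod hΛ hΛM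
      _ = (∏ t ∈ Ico m (m + n), M t) * r ^ n := by
        rw [prod_mul_distrib, prod_const, Nat.card_Ico, Nat.add_sub_cancel_left]
  rw [← Ico_add_one_right_eq_Icc, prod_Ico_succ_top (Nat.le_add_right m n),
    div_le_div_iff₀ (mul_pos hM_Ico hM_top) hM_top]
  calc (∏ t ∈ Ico m (m + n), Λ t) * M (m + n)
      ≤ (∏ t ∈ Ico m (m + n), M t) * r ^ n * M (m + n) :=
        mul_le_mul_of_nonneg_right hprod hM_top.le
    _ = r ^ n * ((∏ t ∈ Ico m (m + n), M t) * M (m + n)) := by ring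

theorem ENNReal.tsum_tsum_mul_add_le (a c : ℕ → ℝ≥0∞) :
    ∑' k, ∑' l, a l * c (k + l) ≤ (∑' l, a l) * ∑' k, c k :=
  calc ∑' k, ∑' l, a l * c (k + l) = ∑' l, a l * ∑' k, c (k + l) := by
        rw [ENNReal.tsum_comm]
        exact tsum_congr fun l => ENNReal.tsum_mul_left
    _ ≤ ∑' l, a l * ∑' k, c k := ENNReal.tsum_le_tsum fun l =>
        mul_le_mul_right (ENNReal.tsum_comp_le_tsum_of_injective (add_left_injective l) c) _
    _ = (∑' l, a l) * ∑' k, c k := ENNReal.tsum_mul_right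

theorem birth_death_hitting_time_series_bound_general (p : ℕ) (Λ M : ℕ → ℝ)
    (hΛ : ∀ q, 0 ≤ Λ q) (hM : ∀ q, 0 < M q)
    (hdom : ∀ q, p < q → Λ q ≤ M q / 2) :
    (∑' k : ℕ, (ENNReal.ofReal (1 / M (p + 1 + k))
        + ∑' l : ℕ, ENNReal.ofReal
            ((∏ t ∈ Finset.Ico (p + 1 + k) (p + 1 + k + 1 + l), Λ t)
              / (∏ t ∈ Finset.Icc (p + 1 + k) (p + 1 + k + 1 + l), M t))))
      ≤ 2 * ∑' k : ℕ, ENNReal.ofReal (1 / M (p + 1 + k)) := by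
  set c : ℕ → ℝ≥0∞ := fun k => ENNReal.ofReal (1 / M (p + 1 + k))
  have hterm (k l : ℕ) : ENNReal.ofReal
      ((∏ t ∈ Ico (p + 1 + k) (p + 1 + k + 1 + l), Λ t)
        / (∏ t ∈ Icc (p + 1 + k) (p + 1 + k + 1 + l), M t)) ≤ 2⁻¹ ^ (l + 1) * c (k + (l + 1)) := by
    rw [show p + 1 + k + 1 + l = p + 1 + k + (l + 1) by ring]
    refine (ENNReal.ofReal_le_ofReal (prod_Ico_div_prod_Icc_le_pow_div (r := 2⁻¹) _ _
      (fun t _ => hΛ t) (fun t _ => hM t)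
      fun t ht => hdom t (by have := (mem_Ico.1 ht).1; omega))).trans_eq ?_
    rw [div_eq_mul_one_div, ENNReal.ofReal_mul (by positivity), ENNReal.ofReal_pow (by norm_num),
      ENNReal.ofReal_inv_of_pos two_pos, ENNReal.ofReal_ofNat, add_assoc]
  calc ∑' k, (c k + ∑' l, ENNReal.ofReal
          ((∏ t ∈ Ico (p + 1 + k) (p + 1 + k + 1 + l), Λ t)
            / (∏ t ∈ Icc (p + 1 + k) (p + 1 + k + 1 + l), M t)))
      ≤ ∑' k, ∑' l, 2⁻¹ ^ l * c (k + l) := ENNReal.tsum_le_tsum fun k => by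
        rw [tsum_eq_zero_add' (f := fun l => 2⁻¹ ^ l * c (k + l)) ENNReal.summable, pow_zero,
          one_mul, add_zero]
        exact add_le_add_right (ENNReal.tsum_le_tsum (hterm k)) _
    _ ≤ (∑' l, (2⁻¹ : ℝ≥0∞) ^ l) * ∑' k, c k := ENNReal.tsum_tsum_mul_add_le _ _
    _ = 2 * ∑' k, c k := by rw [ENNReal.tsum_geometric, ENNReal.one_sub_inv_two, inv_inv]

/-- hitting-time series bound: if `Λ(q) ≤ M(q)/2` for all `q > p` and
`Σ_{m>p} 1/M(m) < ∞`, then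
`Σ_{m>p} [1/M(m) + Σ_{i>m} (Λ(m)⋯Λ(i−1))/(M(m)⋯M(i))] ≤ 2·Σ_{m>p} 1/M(m)`,
all sums being taken in `[0,∞]` (indices parametrized as `m = p+1+k`, `i = m+1+l`). -/
theorem birth_death_hitting_time_series_bound (p : ℕ) (Λ M : ℕ → ℝ)
    (hΛ : ∀ q, 0 ≤ Λ q) (hM : ∀ q, 0 < M q)
    (hdom : ∀ q, p < q → Λ q ≤ M q / 2)
    (hsum : (∑' k : ℕ, ENNReal.ofReal (1 / M (p + 1 + k))) < ⊤) :
    (∑' k : ℕ, (ENNReal.ofReal (1 / M (p + 1 + k))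
        + ∑' l : ℕ, ENNReal.ofReal
            ((∏ t ∈ Finset.Ico (p + 1 + k) (p + 1 + k + 1 + l), Λ t)
              / (∏ t ∈ Finset.Icc (p + 1 + k) (p + 1 + k + 1 + l), M t))))
      ≤ 2 * ∑' k : ℕ, ENNReal.ofReal (1 / M (p + 1 + k)) :=
  birth_death_hitting_time_series_bound_general p Λ M hΛ hM hdom
end
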